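/- Let s be real with π + 1 < s and 2·arccos(−2/s) ≤ s − 1. Then the value (1 + 2·arccos(−2/s))/s + √(1 − 4/s²) is the greatest value of the function h(a) = (1 + a)/s + sin(a/2) over a ∈ [π, min{s − 1, 2π}]; the maximum is attained at a = 2·arccos(−2/s). (This gives the both-explore lower bound for s ≥ c₄.₉₇, where c₄.₉₇ ≈ 4.9699 is the speed at which s − 1 = 2·arccos(−2/s).) -/

import Mathlib

/-!
The maximiser is found by the tangent-line trick: `sin` is concave on `[0, π]`, so for
`a ∈ [0, 2π]` the value `sin (a / 2)` lies below the tangent line of `sin` at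
`t = arccos (-2 / s)`. Since `cos t = -2 / s`, that tangent line exactly cancels the linear
part `a / s` of `h`, which is therefore bounded by its value `h (2 t)`.
-/

open Real Set

lemma ConcaveOn.le_add_mul_sub_of_hasDerivAt {S : Set ℝ} {f : ℝ → ℝ} {f' x t : ℝ}
    (hf : ConcaveOn ℝ S f) (hx : x ∈ S) (ht : t ∈ S) (hderiv : HasDerivAt f f' t) :
    f x ≤ f t + f' * (x - t) := by
  rcases lt_trichotomy x t with hxt | rfl | htx
  · have hslope := hf.le_slope_of_hasDerivAt hx ht hxt hderiv
    rw [slope_def_field, le_div_iff₀ (sub_pos.2 hxt)] at hslope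
    linarith
  · simp
  · have hslope := hf.slope_le_of_hasDerivAt ht hx htx hderiv
    rw [slope_def_field, div_le_iff₀ (sub_pos.2 htx)] at hslope
    linarith

lemma Real.sin_le_sin_add_cos_mul_sub {x t : ℝ} (hx : x ∈ Icc 0 π) (ht : t ∈ Icc 0 π) :
    sin x ≤ sin t + cos t * (x - t) :=
  strictConcaveOn_sin_Icc.concaveOn.le_add_mul_sub_of_hasDerivAt hx ht (hasDerivAt_sin t)

lemma Real.sin_arccos_neg_two_div (s : ℝ) : sin (arccos (-2 / s)) = √(1 - 4 / s ^ 2) := by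
  rw [sin_arccos, div_pow]
  norm_num

lemma Real.pi_div_two_le_arccos_neg_two_div {s : ℝ} (hs : 0 ≤ s) :
    π / 2 ≤ arccos (-2 / s) := by
  rw [← arccos_zero]
  exact arccos_le_arccos (div_nonpos_of_nonpos_of_nonneg (by norm_num) hs)

lemma add_div_add_sin_half_le {s a : ℝ} (hs : 2 ≤ s) (ha : a ∈ Icc 0 (2 * π)) :
    (1 + a) / s + sin (a / 2) ≤ (1 + 2 * arccos (-2 / s)) / s + sin (arccos (-2 / s)) := by
  set t := arccos (-2 / s)
  have hs0 : 0 < s := by linarith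
  have hcos : cos t = -2 / s := by
    refine cos_arccos ?_ (by linarith [div_nonneg zero_le_two hs0.le, neg_div s 2])
    rw [le_div_iff₀ hs0]
    linarith
  have htangent := sin_le_sin_add_cos_mul_sub (x := a / 2) (t := t)
    ⟨by linarith [ha.1], by linarith [ha.2]⟩ ⟨arccos_nonneg _, arccos_le_pi _⟩
  have hline : (1 + a) / s + cos t * (a / 2 - t) = (1 + 2 * t) / s := by
    rw [hcos]
    field_simp
    ring
  linarith

/-- BES (antipodal) lower bound for `s ≥ c₄.₉₇`: if `π + 1 < s` and
`2·arccos(−2/s) ≤ s − 1`, then `(1 + 2·arccos(−2/s))/s + √(1 − 4/s²)` is the greatest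
value of `h(a) = (1 + a)/s + sin(a/2)` over `a ∈ [π, min (s − 1) (2π)]`, attained at
`a = 2·arccos(−2/s)`. -/
theorem bes_antipodal_large (s : ℝ) (hs : Real.pi + 1 < s)
    (hc : 2 * Real.arccos (-2 / s) ≤ s - 1) :
    (∀ a ∈ Set.Icc Real.pi (min (s - 1) (2 * Real.pi)),
      (1 + a) / s + Real.sin (a / 2) ≤
        (1 + 2 * Real.arccos (-2 / s)) / s + Real.sqrt (1 - 4 / s ^ 2)) ∧
    2 * Real.arccos (-2 / s) ∈ Set.Icc Real.pi (min (s - 1) (2 * Real.pi)) ∧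
    (1 + 2 * Real.arccos (-2 / s)) / s + Real.sin (2 * Real.arccos (-2 / s) / 2) =
      (1 + 2 * Real.arccos (-2 / s)) / s + Real.sqrt (1 - 4 / s ^ 2) := by
  have hs2 : 2 ≤ s := by linarith [pi_gt_three]
  have hpi_le : π ≤ 2 * arccos (-2 / s) := by
    linarith [pi_div_two_le_arccos_neg_two_div (by linarith : (0 : ℝ) ≤ s)]
  have hle_two_pi : 2 * arccos (-2 / s) ≤ 2 * π := by linarith [arccos_le_pi (-2 / s)]
  rw [← sin_arccos_neg_two_div]
  refine ⟨fun a ha ↦ ?_, ⟨hpi_le, le_min hc hle_two_pi⟩,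
    by rw [mul_div_cancel_left₀ _ two_ne_zero]⟩
  exact add_div_add_sin_half_le hs2 ⟨by linarith [pi_pos, ha.1], ha.2.trans (min_le_right _ _)⟩
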